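/- arXiv:0811.0062 — 4 statements merged into one kernel-verified Lean document; each statement's English description precedes it below -/
import Mathlib

section
/- With the setup of the previous lattice construction, for any two distinct lines l_1, l_2 of P^2(F_q), the vector w_{l_1} - w_{l_2} has norm zero, i.e. <w_{l_1} - w_{l_2}, w_{l_1} - w_{l_2}> = 0. -/
/-!
The Gram matrix of the vectors `w_l` is constant: expanding sesquilinearly,
`⟪w_l, w_l'⟫ = q (|l ∩ l'| - q δ_{l l'})` once `p p̄ = q`, and in a projective plane of order `q`
two lines meet in `q + 1` points if they are equal and in one point otherwise, so every entry
is `q`. The four terms of `⟪w_{l₁} - w_{l₂}, w_{l₁} - w_{l₂}⟫` then cancel.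
-/

open Finset

section ProjectivePlane

variable {Point Line : Type*} [Fintype Point] (I : Point → Line → Prop) [∀ x l, Decidable (I x l)]

def meet (l l' : Line) : Finset Point := {x | I x l ∧ I x l'}

variable {I}

theorem card_meet_self {q : ℕ} (hline : ∀ l, #{x | I x l} = q + 1) (l : Line) :
    #(meet I l l) = q + 1 := by
  simpa [meet] using hline l

theorem card_meet_of_ne (hmeet : ∀ l₁ l₂, l₁ ≠ l₂ → ∃! x, I x l₁ ∧ I x l₂) {l l' : Line}
    (h : l ≠ l') : #(meet I l l') = 1 := by
  obtain ⟨x, hx, hu⟩ := hmeet l l' h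
  exact card_eq_one.mpr ⟨x, by ext y; simpa [meet] using ⟨hu y, fun h => h ▸ hx⟩⟩

theorem sum_filter_ite {M : Type*} [AddCommMonoid M] (l l' : Line) (c : M) :
    ∑ x ∈ univ.filter (fun x => I x l), (if I x l' then c else 0) = #(meet I l l') • c := by
  rw [sum_ite, sum_const_zero, add_zero, sum_const, filter_filter]
  rfl

theorem meet_comm (l l' : Line) : meet I l l' = meet I l' l := by
  simp only [meet, and_comm]

end ProjectivePlane

section Sesquilinear

variable {O : Type*} [CommRing O] [StarRing O] {Point Line : Type*} [Fintype Point]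
  {I : Point → Line → Prop} [∀ x l, Decidable (I x l)]
  {B : ((Point ⊕ Line) →₀ O) →ₛₗ[starRingEnd O] ((Point ⊕ Line) →₀ O) →ₗ[O] O}

theorem apply_line_points {c : O}
    (hBlx : ∀ x l, B (Finsupp.single (Sum.inr l) 1) (Finsupp.single (Sum.inl x) 1)
      = if I x l then c else 0) (l l' : Line) :
    B (Finsupp.single (Sum.inr l) 1)
        (∑ x ∈ univ.filter (fun x => I x l'), Finsupp.single (Sum.inl x) 1)
      = #(meet I l' l) • c := by
  simp only [map_sum, hBlx, sum_filter_ite]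

theorem apply_points_line {c : O}
    (hBxl : ∀ x l, B (Finsupp.single (Sum.inl x) 1) (Finsupp.single (Sum.inr l) 1)
      = if I x l then c else 0) (l l' : Line) :
    B (∑ x ∈ univ.filter (fun x => I x l), Finsupp.single (Sum.inl x) 1)
        (Finsupp.single (Sum.inr l') 1)
      = #(meet I l l') • c := by
  simp only [map_sum, LinearMap.sum_apply, hBxl, sum_filter_ite]

theorem apply_points_points [DecidableEq Point] {c : O}
    (hBxx : ∀ x x', B (Finsupp.single (Sum.inl x) 1) (Finsupp.single (Sum.inl x') 1)
      = if x = x' then c else 0) (l l' : Line) :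
    B (∑ x ∈ univ.filter (fun x => I x l), Finsupp.single (Sum.inl x) 1)
      (∑ x ∈ univ.filter (fun x => I x l'), Finsupp.single (Sum.inl x) 1)
      = #(meet I l l') • c := by
  simp only [map_sum, LinearMap.sum_apply, hBxx]
  rw [sum_comm]
  simp only [sum_ite_eq, mem_filter, mem_univ, true_and, sum_filter_ite]

end Sesquilinear

theorem apply_w_w {O : Type*} [CommRing O] [StarRing O] {q : ℕ} {p : O}
    (hp : p * star p = (q : O)) {Point Line : Type*} [Fintype Point] [DecidableEq Point]
    [DecidableEq Line] {I : Point → Line → Prop} [∀ x l, Decidable (I x l)]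
    {B : ((Point ⊕ Line) →₀ O) →ₛₗ[starRingEnd O] ((Point ⊕ Line) →₀ O) →ₗ[O] O}
    (hBxx : ∀ x x', B (Finsupp.single (Sum.inl x) 1) (Finsupp.single (Sum.inl x') 1)
      = if x = x' then -(q : O) else 0)
    (hBll : ∀ l l', B (Finsupp.single (Sum.inr l) 1) (Finsupp.single (Sum.inr l') 1)
      = if l = l' then -(q : O) else 0)
    (hBxl : ∀ x l, B (Finsupp.single (Sum.inl x) 1) (Finsupp.single (Sum.inr l) 1)
      = if I x l then p else 0)
    (hBlx : ∀ x l, B (Finsupp.single (Sum.inr l) 1) (Finsupp.single (Sum.inl x) 1)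
      = if I x l then star p else 0)
    {w : Line → ((Point ⊕ Line) →₀ O)}
    (hw : ∀ l, w l = star p • Finsupp.single (Sum.inr l) 1 +
      ∑ x ∈ Finset.univ.filter (fun x => I x l), Finsupp.single (Sum.inl x) 1)
    (l l' : Line) :
    B (w l) (w l') = q * (#(meet I l l') - if l = l' then (q : O) else 0) := by
  rw [hw, hw]
  simp only [map_add, map_smulₛₗ, LinearMap.add_apply, LinearMap.smul_apply, smul_eq_mul,
    starRingEnd_apply, star_star, RingHom.id_apply, hBll, apply_line_points hBlx,
    apply_points_line hBxl, apply_points_points hBxx, meet_comm l' l, nsmul_eq_mul]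
  split_ifs
  · linear_combination (2 * #(meet I l l') - q : O) * hp
  · linear_combination (2 * #(meet I l l') : O) * hp

theorem norm_wl_sub_wl_general (q : ℕ) (O : Type*) [CommRing O] [StarRing O]
    (p : O) (hp : p * star p = (q : O))
    (Point Line : Type*) [Fintype Point]
    [DecidableEq Point] [DecidableEq Line]
    (I : Point → Line → Prop) [∀ x l, Decidable (I x l)]
    (hline : ∀ l, (Finset.univ.filter fun x => I x l).card = q + 1)
    (hmeet : ∀ l₁ l₂, l₁ ≠ l₂ → ∃! x, I x l₁ ∧ I x l₂)
    (B : ((Point ⊕ Line) →₀ O) →ₛₗ[starRingEnd O] ((Point ⊕ Line) →₀ O) →ₗ[O] O)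
    (hBxx : ∀ x x', B (Finsupp.single (Sum.inl x) 1) (Finsupp.single (Sum.inl x') 1)
      = if x = x' then -(q : O) else 0)
    (hBll : ∀ l l', B (Finsupp.single (Sum.inr l) 1) (Finsupp.single (Sum.inr l') 1)
      = if l = l' then -(q : O) else 0)
    (hBxl : ∀ x l, B (Finsupp.single (Sum.inl x) 1) (Finsupp.single (Sum.inr l) 1)
      = if I x l then p else 0)
    (hBlx : ∀ x l, B (Finsupp.single (Sum.inr l) 1) (Finsupp.single (Sum.inl x) 1)
      = if I x l then star p else 0)
    (w : Line → ((Point ⊕ Line) →₀ O))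
    (hw : ∀ l, w l = star p • Finsupp.single (Sum.inr l) 1 +
      ∑ x ∈ Finset.univ.filter (fun x => I x l), Finsupp.single (Sum.inl x) 1)
    (l₁ l₂ : Line) :
    B (w l₁ - w l₂) (w l₁ - w l₂) = 0 := by
  have gram : ∀ l l', B (w l) (w l') = q := by
    intro l l'
    rw [apply_w_w hp hBxx hBll hBxl hBlx hw]
    by_cases h : l = l'
    · subst h
      simp [card_meet_self hline]
    · simp [card_meet_of_ne hmeet h, h]
  simp only [map_sub, LinearMap.sub_apply, gram, sub_self]

/-- In the Hermitian `O`-module on the points and lines of a finite projective plane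
(as in the paper's construction), for two distinct lines `l₁, l₂` the vector
`w_{l₁} - w_{l₂}` has norm zero. -/
theorem norm_wl_sub_wl (q : ℕ) (O : Type*) [CommRing O] [IsDomain O] [StarRing O]
    (hint : ∀ z : O, ∃ m : ℤ, z * star z = (m : O))
    (p : O) (hp : p * star p = (q : O))
    (Point Line : Type*) [Fintype Point] [Fintype Line]
    [DecidableEq Point] [DecidableEq Line]
    (I : Point → Line → Prop) [∀ x l, Decidable (I x l)]
    (hline : ∀ l, (Finset.univ.filter fun x => I x l).card = q + 1)
    (hmeet : ∀ l₁ l₂, l₁ ≠ l₂ → ∃! x, I x l₁ ∧ I x l₂)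
    (B : ((Point ⊕ Line) →₀ O) →ₛₗ[starRingEnd O] ((Point ⊕ Line) →₀ O) →ₗ[O] O)
    (hBxx : ∀ x x', B (Finsupp.single (Sum.inl x) 1) (Finsupp.single (Sum.inl x') 1)
      = if x = x' then -(q : O) else 0)
    (hBll : ∀ l l', B (Finsupp.single (Sum.inr l) 1) (Finsupp.single (Sum.inr l') 1)
      = if l = l' then -(q : O) else 0)
    (hBxl : ∀ x l, B (Finsupp.single (Sum.inl x) 1) (Finsupp.single (Sum.inr l) 1)
      = if I x l then p else 0)
    (hBlx : ∀ x l, B (Finsupp.single (Sum.inr l) 1) (Finsupp.single (Sum.inl x) 1)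
      = if I x l then star p else 0)
    (w : Line → ((Point ⊕ Line) →₀ O))
    (hw : ∀ l, w l = star p • Finsupp.single (Sum.inr l) 1 +
      ∑ x ∈ Finset.univ.filter (fun x => I x l), Finsupp.single (Sum.inl x) 1)
    (l₁ l₂ : Line) (hne : l₁ ≠ l₂) :
    B (w l₁ - w l₂) (w l₁ - w l₂) = 0 :=
  norm_wl_sub_wl_general q O p hp Point Line I hline hmeet B hBxx hBll hBxl hBlx w hw l₁ l₂
end

section
/- In the lattice L_p = L^circ_p / U (quotient by the span U of all differences w_{l_1} - w_{l_2}), the image w_P of any w_l satisfies <w_P, w_P> = q. -/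
/-!
Expanding `w_l = p̄ e_l + ∑_{x ∈ l} e_x` sesquilinearly, and using that the `q + 1` points of `l`
are mutually orthogonal of norm `-q`, each has product `p` with `e_l`, and `p p̄ = q`, gives
`⟨w_l, w_l⟩ = -q² + 2q(q + 1) - q(q + 1) = q` already in `L°_p`; the form on `L_p` is the
descended one.
-/

namespace LinearMap

variable {R M : Type*} [CommRing R] [StarRing R] [AddCommGroup M] [Module R M]
  (B : M →ₛₗ[starRingEnd R] M →ₗ[R] R)

theorem sesq_smul_add_self (c : R) (u v : M) :
    B (c • u + v) (c • u + v)
      = star c * c * B u u + star c * B u v + c * B v u + B v v := by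
  simp only [map_add, map_smulₛₗ, add_apply, smul_apply, starRingEnd_apply, RingHom.id_apply,
    smul_eq_mul]
  ring

theorem sesq_sum_right_of_const {ι : Type*} (s : Finset ι) (u : ι → M) (v : M) (c : R)
    (h : ∀ i ∈ s, B v (u i) = c) : B v (∑ i ∈ s, u i) = s.card * c := by
  rw [map_sum, Finset.sum_congr rfl h, Finset.sum_const, nsmul_eq_mul]

theorem sesq_sum_left_of_const {ι : Type*} (s : Finset ι) (u : ι → M) (v : M) (c : R)
    (h : ∀ i ∈ s, B (u i) v = c) : B (∑ i ∈ s, u i) v = s.card * c := by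
  rw [map_sum, sum_apply, Finset.sum_congr rfl h, Finset.sum_const, nsmul_eq_mul]

theorem sesq_sum_self_of_orthogonal {ι : Type*} [DecidableEq ι] (s : Finset ι) (u : ι → M)
    (a : R) (h : ∀ i j, B (u i) (u j) = if i = j then a else 0) :
    B (∑ i ∈ s, u i) (∑ i ∈ s, u i) = s.card * a :=
  sesq_sum_left_of_const B s u _ a fun i hi => by
    rw [map_sum, Finset.sum_congr rfl fun j _ => h i j, Finset.sum_ite_eq s i, if_pos hi]

end LinearMap

theorem norm_wP_general (q : ℕ) (O : Type*) [CommRing O] [StarRing O]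
    (p : O) (hp : p * star p = (q : O))
    (Point Line : Type*) [Fintype Point]
    [DecidableEq Point] [DecidableEq Line]
    (I : Point → Line → Prop) [∀ x l, Decidable (I x l)]
    (hline : ∀ l, (Finset.univ.filter fun x => I x l).card = q + 1)
    (B : ((Point ⊕ Line) →₀ O) →ₛₗ[starRingEnd O] ((Point ⊕ Line) →₀ O) →ₗ[O] O)
    (hBxx : ∀ x x', B (Finsupp.single (Sum.inl x) 1) (Finsupp.single (Sum.inl x') 1)
      = if x = x' then -(q : O) else 0)
    (hBll : ∀ l l', B (Finsupp.single (Sum.inr l) 1) (Finsupp.single (Sum.inr l') 1)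
      = if l = l' then -(q : O) else 0)
    (hBxl : ∀ x l, B (Finsupp.single (Sum.inl x) 1) (Finsupp.single (Sum.inr l) 1)
      = if I x l then p else 0)
    (hBlx : ∀ x l, B (Finsupp.single (Sum.inr l) 1) (Finsupp.single (Sum.inl x) 1)
      = if I x l then star p else 0)
    (w : Line → ((Point ⊕ Line) →₀ O))
    (hw : ∀ l, w l = star p • Finsupp.single (Sum.inr l) 1 +
      ∑ x ∈ Finset.univ.filter (fun x => I x l), Finsupp.single (Sum.inl x) 1)
    (U : Submodule O ((Point ⊕ Line) →₀ O))
    (B' : (((Point ⊕ Line) →₀ O) ⧸ U) →ₛₗ[starRingEnd O]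
      (((Point ⊕ Line) →₀ O) ⧸ U) →ₗ[O] O)
    (hdesc : ∀ v v', B' (U.mkQ v) (U.mkQ v') = B v v') :
    ∀ l : Line, B' (U.mkQ (w l)) (U.mkQ (w l)) = (q : O) := by
  intro l
  set pts := Finset.univ.filter fun x => I x l
  let e : Point ⊕ Line → (Point ⊕ Line) →₀ O := fun i => Finsupp.single i 1
  have hcard : (pts.card : O) = q + 1 := by rw [hline l]; push_cast; rfl
  have incident : ∀ x ∈ pts, I x l := fun x hx => (Finset.mem_filter.mp hx).2
  have hline_pts := LinearMap.sesq_sum_right_of_const B pts (e ∘ Sum.inl) (e (Sum.inr l))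
    (star p) fun x hx => by simp only [e, Function.comp, hBlx, if_pos (incident x hx)]
  have hpts_line := LinearMap.sesq_sum_left_of_const B pts (e ∘ Sum.inl) (e (Sum.inr l))
    p fun x hx => by simp only [e, Function.comp, hBxl, if_pos (incident x hx)]
  have hpts_pts := LinearMap.sesq_sum_self_of_orthogonal B pts (e ∘ Sum.inl) (-(q : O)) hBxx
  rw [hdesc, hw l, LinearMap.sesq_smul_add_self]
  simp only [e, Function.comp] at hline_pts hpts_line hpts_pts
  rw [hline_pts, hpts_line, hpts_pts, hBll, if_pos rfl, star_star, hcard]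
  linear_combination ((q : O) + 2) * hp

/-- In the quotient lattice `L_p = L°_p / U`, where `U` is the span of all differences
`w_{l₁} - w_{l₂}`, the image `w_P` of any `w_l` under the descended Hermitian form
satisfies `⟨w_P, w_P⟩ = q`. -/
theorem norm_wP (q : ℕ) (O : Type*) [CommRing O] [IsDomain O] [StarRing O]
    (hint : ∀ z : O, ∃ m : ℤ, z * star z = (m : O))
    (p : O) (hp : p * star p = (q : O))
    (Point Line : Type*) [Fintype Point] [Fintype Line]
    [DecidableEq Point] [DecidableEq Line]
    (I : Point → Line → Prop) [∀ x l, Decidable (I x l)]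
    (hline : ∀ l, (Finset.univ.filter fun x => I x l).card = q + 1)
    (hmeet : ∀ l₁ l₂, l₁ ≠ l₂ → ∃! x, I x l₁ ∧ I x l₂)
    (B : ((Point ⊕ Line) →₀ O) →ₛₗ[starRingEnd O] ((Point ⊕ Line) →₀ O) →ₗ[O] O)
    (hBxx : ∀ x x', B (Finsupp.single (Sum.inl x) 1) (Finsupp.single (Sum.inl x') 1)
      = if x = x' then -(q : O) else 0)
    (hBll : ∀ l l', B (Finsupp.single (Sum.inr l) 1) (Finsupp.single (Sum.inr l') 1)
      = if l = l' then -(q : O) else 0)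
    (hBxl : ∀ x l, B (Finsupp.single (Sum.inl x) 1) (Finsupp.single (Sum.inr l) 1)
      = if I x l then p else 0)
    (hBlx : ∀ x l, B (Finsupp.single (Sum.inr l) 1) (Finsupp.single (Sum.inl x) 1)
      = if I x l then star p else 0)
    (w : Line → ((Point ⊕ Line) →₀ O))
    (hw : ∀ l, w l = star p • Finsupp.single (Sum.inr l) 1 +
      ∑ x ∈ Finset.univ.filter (fun x => I x l), Finsupp.single (Sum.inl x) 1)
    (U : Submodule O ((Point ⊕ Line) →₀ O))
    (hU : U = Submodule.span O {v | ∃ l₁ l₂ : Line, v = w l₁ - w l₂})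
    (B' : (((Point ⊕ Line) →₀ O) ⧸ U) →ₛₗ[starRingEnd O]
      (((Point ⊕ Line) →₀ O) ⧸ U) →ₗ[O] O)
    (hdesc : ∀ v v', B' (U.mkQ v) (U.mkQ v') = B v v') :
    ∀ l : Line, B' (U.mkQ (w l)) (U.mkQ (w l)) = (q : O) :=
  norm_wP_general q O p hp Point Line I hline B hBxx hBll hBxl hBlx w hw U B' hdesc
end

section
/- Let V be a complex vector space with Hermitian form of signature (1,n), and let x, y be vectors of positive norm. Define d([x],[y]) = arccosh(|<x,y>| / (|x| |y|)). Then for vectors x_1, ..., x_n of positive norm with pairwise real nonnegative inner products and any z of positive norm, the maximum of d([z], [w]) over w in the convex hull Conv(x_1,...,x_n) (taken in V, all such w having positive norm) is attained at one of the vertices x_i. -/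
open scoped BigOperators

/-- The inverse hyperbolic cosine (for `x ≥ 1`): `arccosh x = log (x + √(x² - 1))`. -/
noncomputable def arccosh (x : ℝ) : ℝ := Real.log (x + Real.sqrt (x ^ 2 - 1))

/-- The standard Hermitian form of signature `(1,n)` on `ℂ^{1,n}`. -/
noncomputable def hermB (n : ℕ) (z w : Fin (n + 1) → ℂ) : ℂ :=
  (starRingEnd ℂ) (z 0) * w 0 -
    ∑ i ∈ Finset.univ.filter (fun i : Fin (n + 1) => i ≠ 0), (starRingEnd ℂ) (z i) * w i

/-- The complex hyperbolic distance between (the projective classes of) two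
positive-norm vectors: `d([x],[y]) = arccosh(|⟨x,y⟩| / (|x|·|y|))`. -/
noncomputable def chDist (n : ℕ) (x y : Fin (n + 1) → ℂ) : ℝ :=
  arccosh (‖hermB n x y‖ /
    (Real.sqrt (hermB n x x).re * Real.sqrt (hermB n y y).re))

/-! Choose the vertex `xᵢ` maximising `|⟨z,xⱼ⟩| / |xⱼ|`. For `w = ∑ tⱼ xⱼ` the triangle
inequality bounds `|⟨z,w⟩|` by this maximal ratio times `∑ tⱼ |xⱼ|`. Since the `⟨xⱼ,xₗ⟩` are
nonnegative reals, the reverse Cauchy–Schwarz inequality `|xⱼ| |xₗ| ≤ ⟨xⱼ,xₗ⟩` of signature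
`(1,n)` gives `(∑ tⱼ |xⱼ|)² ≤ ⟨w,w⟩`. Hence `|⟨z,w⟩| / |w| ≤ |⟨z,xᵢ⟩| / |xᵢ|`, and `arccosh` is
increasing. -/

open ComplexOrder

noncomputable def hermNorm (n : ℕ) (v : Fin (n + 1) → ℂ) : ℝ :=
  √(hermB n v v).re

lemma arccosh_le_arccosh {a b : ℝ} (ha : 1 ≤ a) (hab : a ≤ b) : arccosh a ≤ arccosh b := by
  unfold arccosh
  gcongr

/-- Aczél's inequality for two pairs. -/
lemma sqrt_sq_sub_sq_mul_sqrt_sq_sub_sq_le {a b c d : ℝ} (ha : 0 ≤ a) (hb : 0 ≤ b)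
    (hd : 0 ≤ d) (hba : b ≤ a) (hdc : d ≤ c) :
    √(a ^ 2 - b ^ 2) * √(c ^ 2 - d ^ 2) ≤ a * c - b * d := by
  have hbd : b * d ≤ a * c := mul_le_mul hba hdc hd ha
  rw [← Real.sqrt_mul (by nlinarith), Real.sqrt_le_left (by linarith)]
  nlinarith [sq_nonneg (a * d - b * c)]

lemma norm_sum_conj_mul_le {ι : Type*} (s : Finset ι) (f g : ι → ℂ) :
    ‖∑ i ∈ s, starRingEnd ℂ (f i) * g i‖ ≤ √(∑ i ∈ s, ‖f i‖ ^ 2) * √(∑ i ∈ s, ‖g i‖ ^ 2) :=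
  calc ‖∑ i ∈ s, starRingEnd ℂ (f i) * g i‖
      ≤ ∑ i ∈ s, ‖f i‖ * ‖g i‖ := (norm_sum_le _ _).trans_eq <| by simp
    _ ≤ _ := Real.sum_mul_le_sqrt_mul_sqrt s _ _

section hermB

variable {n : ℕ} {ι : Type*} [Fintype ι]

lemma hermB_conj_symm (x y : Fin (n + 1) → ℂ) : starRingEnd ℂ (hermB n x y) = hermB n y x := by
  simp [hermB, mul_comm]

lemma hermB_sum_right (z : Fin (n + 1) → ℂ) (t : ι → ℝ) (x : ι → Fin (n + 1) → ℂ) :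
    hermB n z (∑ j, t j • x j) = ∑ j, (t j : ℂ) * hermB n z (x j) := by
  simp only [hermB, Finset.sum_apply, Pi.smul_apply, Complex.real_smul, Finset.mul_sum,
    mul_sub, Finset.sum_sub_distrib]
  congr 1
  · exact Finset.sum_congr rfl fun j _ => by ring
  · rw [Finset.sum_comm]
    exact Finset.sum_congr rfl fun j _ => Finset.sum_congr rfl fun i _ => by ring

lemma hermB_sum_left (y : Fin (n + 1) → ℂ) (t : ι → ℝ) (x : ι → Fin (n + 1) → ℂ) :
    hermB n (∑ j, t j • x j) y = ∑ j, (t j : ℂ) * hermB n (x j) y := by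
  rw [← hermB_conj_symm, hermB_sum_right, map_sum]
  simp only [map_mul, Complex.conj_ofReal, hermB_conj_symm]

lemma re_hermB_sum_sum (t : ι → ℝ) (x : ι → Fin (n + 1) → ℂ) :
    (hermB n (∑ j, t j • x j) (∑ j, t j • x j)).re =
      ∑ j, ∑ l, t j * t l * (hermB n (x j) (x l)).re := by
  rw [hermB_sum_left]
  simp only [hermB_sum_right, Finset.mul_sum, Complex.re_sum, ← mul_assoc,
    ← Complex.ofReal_mul, Complex.re_ofReal_mul]

lemma re_hermB_self (x : Fin (n + 1) → ℂ) :
    (hermB n x x).re = ‖x 0‖ ^ 2 - ∑ i ∈ Finset.univ.filter (· ≠ 0), ‖x i‖ ^ 2 := by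
  simp [hermB, Complex.re_sum, Complex.conj_mul', ← Complex.ofReal_pow]

/-- The reverse Cauchy–Schwarz inequality for positive vectors in signature `(1,n)`. -/
lemma hermNorm_mul_hermNorm_le {x y : Fin (n + 1) → ℂ} (hx : 0 < (hermB n x x).re)
    (hy : 0 < (hermB n y y).re) : hermNorm n x * hermNorm n y ≤ ‖hermB n x y‖ := by
  set S := Finset.univ.filter (fun i : Fin (n + 1) => i ≠ 0)
  have hsplit : hermB n x y =
      starRingEnd ℂ (x 0) * y 0 - ∑ i ∈ S, starRingEnd ℂ (x i) * y i := rfl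
  have hself (v : Fin (n + 1) → ℂ) :
      (hermB n v v).re = ‖v 0‖ ^ 2 - √(∑ i ∈ S, ‖v i‖ ^ 2) ^ 2 := by
    rw [re_hermB_self, Real.sq_sqrt (Finset.sum_nonneg fun _ _ => sq_nonneg _)]
  have hspace_le_time (v : Fin (n + 1) → ℂ) (hv : 0 < (hermB n v v).re) :
      √(∑ i ∈ S, ‖v i‖ ^ 2) ≤ ‖v 0‖ :=
    (pow_le_pow_iff_left₀ (Real.sqrt_nonneg _) (norm_nonneg _) two_ne_zero).1
      (by linarith [hself v])
  unfold hermNorm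
  rw [hself x, hself y]
  calc _ ≤ ‖x 0‖ * ‖y 0‖ - √(∑ i ∈ S, ‖x i‖ ^ 2) * √(∑ i ∈ S, ‖y i‖ ^ 2) :=
        sqrt_sq_sub_sq_mul_sqrt_sq_sub_sq_le (norm_nonneg _) (Real.sqrt_nonneg _)
          (Real.sqrt_nonneg _) (hspace_le_time x hx) (hspace_le_time y hy)
    _ ≤ ‖starRingEnd ℂ (x 0) * y 0‖ - ‖∑ i ∈ S, starRingEnd ℂ (x i) * y i‖ := by
        rw [norm_mul, Complex.norm_conj]
        linarith [norm_sum_conj_mul_le S x y]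
    _ ≤ ‖hermB n x y‖ := hsplit ▸ norm_sub_norm_le _ _

lemma hermNorm_mul_hermNorm_le_re {x y : Fin (n + 1) → ℂ} (hx : 0 < (hermB n x x).re)
    (hy : 0 < (hermB n y y).re) (hxy : 0 ≤ hermB n x y) :
    hermNorm n x * hermNorm n y ≤ (hermB n x y).re := by
  have hre : (hermB n x y).re = ‖hermB n x y‖ := by
    simpa using congrArg Complex.re (Complex.norm_of_nonneg' hxy).symm
  exact hre ▸ hermNorm_mul_hermNorm_le hx hy

lemma one_le_div_hermNorm_mul_hermNorm {x y : Fin (n + 1) → ℂ} (hx : 0 < (hermB n x x).re)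
    (hy : 0 < (hermB n y y).re) : 1 ≤ ‖hermB n x y‖ / (hermNorm n x * hermNorm n y) :=
  (one_le_div (mul_pos (Real.sqrt_pos.2 hx) (Real.sqrt_pos.2 hy))).2
    (hermNorm_mul_hermNorm_le hx hy)

lemma chDist_le_chDist_of_div_le {z y y' : Fin (n + 1) → ℂ} (hz : 0 < (hermB n z z).re)
    (hy : 0 < (hermB n y y).re)
    (h : ‖hermB n z y‖ / hermNorm n y ≤ ‖hermB n z y'‖ / hermNorm n y') :
    chDist n z y ≤ chDist n z y' := by
  refine arccosh_le_arccosh (one_le_div_hermNorm_mul_hermNorm hz hy) ?_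
  change _ / (hermNorm n z * hermNorm n y) ≤ _ / (hermNorm n z * hermNorm n y')
  rw [mul_comm (hermNorm n z), mul_comm (hermNorm n z), ← div_div, ← div_div]
  have : 0 < hermNorm n z := Real.sqrt_pos.2 hz
  gcongr

section convexCombination

variable {t : ι → ℝ} {x : ι → Fin (n + 1) → ℂ}

/-- The reverse triangle inequality `∑ tⱼ |xⱼ| ≤ |∑ tⱼ xⱼ|`, squared. -/
lemma sq_sum_mul_hermNorm_le (ht : ∀ j, 0 ≤ t j) (hx : ∀ j, 0 < (hermB n (x j) (x j)).re)
    (hxx : ∀ j l, 0 ≤ hermB n (x j) (x l)) :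
    (∑ j, t j * hermNorm n (x j)) ^ 2 ≤ (hermB n (∑ j, t j • x j) (∑ j, t j • x j)).re := by
  rw [re_hermB_sum_sum, sq, Finset.sum_mul_sum]
  refine Finset.sum_le_sum fun j _ => Finset.sum_le_sum fun l _ => ?_
  calc t j * hermNorm n (x j) * (t l * hermNorm n (x l))
      = t j * t l * (hermNorm n (x j) * hermNorm n (x l)) := by ring
    _ ≤ t j * t l * (hermB n (x j) (x l)).re := by
        gcongr
        · exact mul_nonneg (ht j) (ht l)
        · exact hermNorm_mul_hermNorm_le_re (hx j) (hx l) (hxx j l)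

lemma re_hermB_sum_pos (ht : ∀ j, 0 ≤ t j) (hsum : ∑ j, t j = 1)
    (hx : ∀ j, 0 < (hermB n (x j) (x j)).re) (hxx : ∀ j l, 0 ≤ hermB n (x j) (x l)) :
    0 < (hermB n (∑ j, t j • x j) (∑ j, t j • x j)).re := by
  obtain ⟨j, -, htj⟩ := Finset.exists_lt_of_sum_lt (s := Finset.univ) (f := 0) (g := t)
    (by simp [hsum])
  have hpos : 0 < ∑ j, t j * hermNorm n (x j) :=
    Finset.sum_pos' (fun l _ => mul_nonneg (ht l) (Real.sqrt_nonneg _))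
      ⟨j, Finset.mem_univ _, mul_pos htj (Real.sqrt_pos.2 (hx j))⟩
  exact (pow_pos hpos 2).trans_le (sq_sum_mul_hermNorm_le ht hx hxx)

lemma norm_hermB_sum_le {z : Fin (n + 1) → ℂ} {c : ℝ} (hc : 0 ≤ c) (ht : ∀ j, 0 ≤ t j)
    (hx : ∀ j, 0 < (hermB n (x j) (x j)).re) (hxx : ∀ j l, 0 ≤ hermB n (x j) (x l))
    (hzx : ∀ j, ‖hermB n z (x j)‖ ≤ c * hermNorm n (x j)) :
    ‖hermB n z (∑ j, t j • x j)‖ ≤ c * hermNorm n (∑ j, t j • x j) :=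
  calc ‖hermB n z (∑ j, t j • x j)‖
      ≤ ∑ j, t j * ‖hermB n z (x j)‖ := by
        rw [hermB_sum_right]
        refine (norm_sum_le _ _).trans_eq (Finset.sum_congr rfl fun j _ => ?_)
        rw [norm_mul, Complex.norm_of_nonneg (ht j)]
    _ ≤ ∑ j, t j * (c * hermNorm n (x j)) := by gcongr with j; exacts [ht j, hzx j]
    _ = c * ∑ j, t j * hermNorm n (x j) := by
        rw [Finset.mul_sum]; exact Finset.sum_congr rfl fun j _ => by ring
    _ ≤ c * hermNorm n (∑ j, t j • x j) := by
        gcongr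
        exact Real.le_sqrt_of_sq_le (sq_sum_mul_hermNorm_le ht hx hxx)

end convexCombination

end hermB

/-- For positive-norm vectors `x₁,…,x_k` with pairwise real nonnegative inner
products and a positive-norm vector `z`, the maximum of `d([z],[w])` over `w` in
the convex hull `Conv(x₁,…,x_k)` is attained at one of the vertices `xᵢ`. -/
theorem chDist_max_on_convexHull (n k : ℕ) (hk : 0 < k)
    (x : Fin k → Fin (n + 1) → ℂ) (z : Fin (n + 1) → ℂ)
    (hx : ∀ i, 0 < (hermB n (x i) (x i)).re)
    (hz : 0 < (hermB n z z).re)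
    (hreal : ∀ i j, ∃ r : ℝ, 0 ≤ r ∧ hermB n (x i) (x j) = (r : ℂ)) :
    ∃ i : Fin k, ∀ t : Fin k → ℝ, (∀ j, 0 ≤ t j) → (∑ j, t j) = 1 →
      chDist n z (∑ j, t j • x j) ≤ chDist n z (x i) := by
  have hxx : ∀ i j, 0 ≤ hermB n (x i) (x j) := fun i j => by
    obtain ⟨r, hr, h⟩ := hreal i j
    exact h ▸ Complex.zero_le_real.2 hr
  obtain ⟨i, -, hi⟩ := Finset.exists_max_image Finset.univ
    (fun j => ‖hermB n z (x j)‖ / hermNorm n (x j)) ⟨⟨0, hk⟩, Finset.mem_univ _⟩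
  refine ⟨i, fun t ht hsum => ?_⟩
  have hw := re_hermB_sum_pos ht hsum hx hxx
  refine chDist_le_chDist_of_div_le hz hw ((div_le_iff₀ (Real.sqrt_pos.2 hw)).2 ?_)
  have hc : 0 ≤ ‖hermB n z (x i)‖ / hermNorm n (x i) :=
    div_nonneg (norm_nonneg _) (Real.sqrt_nonneg _)
  refine norm_hermB_sum_le hc ht hx hxx fun j => ?_
  exact (div_le_iff₀ (Real.sqrt_pos.2 (hx j))).1 (hi j (Finset.mem_univ j))
end

section
/- With J_F = [[3, 4p],[4*conj(p), 3]] and beta = [[p, omega],[1, conj(p)]] as above, for column vectors z, z' in C^2, writing beta z = (tau_1, tau_2)^T and beta z' = (tau_1', tau_2')^T, one has z^* J_F z' = conj(theta)(tau_1' conj(tau_2) - tau_2' conj(tau_1)); in particular z^* J_F z = 2 sqrt(3) Im(tau_1 conj(tau_2)). -/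
noncomputable section

/-- `ω = e^{2πi/3}`. -/
def ω : ℂ := Complex.exp (2 * Real.pi * Complex.I / 3)

/-- `p = 2 + ω`. -/
def p : ℂ := 2 + ω

/-- `θ = ω - conj ω`. -/
def θ : ℂ := ω - (starRingEnd ℂ) ω

/-- The matrix `β = [[p, ω], [1, conj p]]`. -/
def β : Matrix (Fin 2) (Fin 2) ℂ := !![p, ω; 1, (starRingEnd ℂ) p]

/-- The Gram matrix `J_F = [[3, 4p], [4 conj p, 3]]`. -/
def JF : Matrix (Fin 2) (Fin 2) ℂ := !![3, 4 * p; 4 * (starRingEnd ℂ) p, 3]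

/-! With `τ = β z`, the Gram matrix factors as `J_F = βᴴ · !![0, -conj θ; conj θ, 0] · β`, so
`z* J_F z'` is the form `conj θ (τ₁' conj τ₂ - τ₂' conj τ₁)` pulled back along `β`. The factorization
is an identity in `ℤ[ω]` once `conj ω = -1 - ω = ω²` is used; on the diagonal the form is
`conj θ (u - conj u)` with `u = τ₁ conj τ₂`, and `conj θ = -√3 i` turns this into `2√3 Im u`. -/

open Complex ComplexConjugate Matrix Real

theorem Matrix.star_dotProduct_conjTranspose_mul_mul_mulVec {m n R : Type*} [Fintype m]
    [Fintype n] [NonUnitalSemiring R] [StarRing R] (A : Matrix m m R) (B : Matrix m n R)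
    (z z' : n → R) :
    star z ⬝ᵥ (Bᴴ * A * B) *ᵥ z' = star (B *ᵥ z) ⬝ᵥ A *ᵥ (B *ᵥ z') := by
  rw [star_mulVec, ← mulVec_mulVec, ← mulVec_mulVec, dotProduct_mulVec, dotProduct_mulVec]

theorem ω_eq : ω = (-1 + √3 * I) / 2 := by
  have harg : 2 * π * I / 3 = ((π - π / 3 : ℝ) : ℂ) * I := by push_cast; ring
  rw [ω, harg, exp_mul_I, ← ofReal_cos, ← ofReal_sin, Real.cos_pi_sub, Real.sin_pi_sub,
    cos_pi_div_three, sin_pi_div_three]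
  push_cast
  ring

theorem conj_ω : conj ω = -1 - ω := by
  rw [ω_eq, map_div₀, map_add, map_neg, map_one, map_mul, conj_ofReal, conj_I, map_ofNat]
  ring

theorem ω_sq : ω ^ 2 = -1 - ω := by
  have hsqrt : (√3 : ℂ) ^ 2 = 3 := by exact_mod_cast Real.sq_sqrt (by norm_num : (0 : ℝ) ≤ 3)
  rw [ω_eq]
  linear_combination (I ^ 2 / 4) * hsqrt + (3 / 4) * I_sq

theorem conj_p : conj p = 1 - ω := by
  rw [p, map_add, map_ofNat, conj_ω]
  ring

theorem conj_θ : conj θ = -1 - 2 * ω := by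
  rw [θ, map_sub, conj_conj, conj_ω]
  ring

theorem conjTranspose_β : βᴴ = !![conj p, 1; conj ω, p] := by
  ext i j
  fin_cases i <;> fin_cases j <;> simp [β]

theorem JF_eq_conjTranspose_mul_mul : JF = βᴴ * !![0, -conj θ; conj θ, 0] * β := by
  rw [conjTranspose_β, β, JF, mul_fin_two, mul_fin_two, conj_p, conj_θ, conj_ω, p]
  simp only [EmbeddingLike.apply_eq_iff_eq, vecCons_inj, and_true]
  refine ⟨⟨?_, ?_⟩, ?_, ?_⟩
  · linear_combination 4 * ω_sq
  · linear_combination (7 - 2 * ω) * ω_sq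
  · linear_combination (9 + 2 * ω) * ω_sq
  · linear_combination 4 * ω_sq

theorem star_dotProduct_JF_mulVec (z z' : Fin 2 → ℂ) :
    star z ⬝ᵥ JF *ᵥ z' =
      conj θ * ((β *ᵥ z') 0 * conj ((β *ᵥ z) 1) - (β *ᵥ z') 1 * conj ((β *ᵥ z) 0)) := by
  rw [JF_eq_conjTranspose_mul_mul, star_dotProduct_conjTranspose_mul_mul_mulVec]
  generalize β *ᵥ z = τ, β *ᵥ z' = τ'
  rw [mulVec_fin_two, vec2_dotProduct]
  simp only [Pi.star_apply, RCLike.star_def, of_apply, cons_val', cons_val_zero, cons_val_one,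
    cons_val_fin_one]
  ring

theorem conj_θ_mul_sub_conj (u : ℂ) : conj θ * (u - conj u) = ((2 * √3 * u.im : ℝ) : ℂ) := by
  rw [conj_θ, ω_eq, sub_conj]
  push_cast
  linear_combination (-2 * √3 * u.im) * I_sq

/-- For `z, z' ∈ ℂ²`, writing `βz = (τ₁, τ₂)ᵀ` and `βz' = (τ₁', τ₂')ᵀ`, one has
`z* J_F z' = conj(θ)(τ₁' conj(τ₂) - τ₂' conj(τ₁))`; in particular
`z* J_F z = 2√3 · Im(τ₁ conj(τ₂))`. -/
theorem inner_via_beta (z z' : Fin 2 → ℂ) :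
    dotProduct (star z) (JF.mulVec z') =
      (starRingEnd ℂ) θ * (β.mulVec z' 0 * (starRingEnd ℂ) (β.mulVec z 1) -
        β.mulVec z' 1 * (starRingEnd ℂ) (β.mulVec z 0)) ∧
    dotProduct (star z) (JF.mulVec z) =
      ((2 * Real.sqrt 3 * (β.mulVec z 0 * (starRingEnd ℂ) (β.mulVec z 1)).im : ℝ) : ℂ) := by
  refine ⟨star_dotProduct_JF_mulVec z z', ?_⟩
  rw [star_dotProduct_JF_mulVec, ← conj_θ_mul_sub_conj, map_mul, conj_conj, mul_comm ((β *ᵥ z) 1)]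

end
end
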